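/- arXiv:math/0402422 — 9 statements merged into one kernel-verified Lean document; each statement's English description precedes it below -/
import Mathlib

section
/- Let F be an algebraically closed field, Γ an additive abelian group, and V = ⊕_{λ∈Γ} V_λ a Γ-graded F-vector space. Let T : V → V be a linear operator which is homogeneous of degree α ≠ 0 (i.e. T(V_μ) ⊆ V_{α+μ} for all μ), locally finite, and such that for every c ∈ F the eigenspace {v ∈ V : Tv = cv} is a Γ-graded subspace of V (spanned by its homogeneous elements). Then T is locally nilpotent. -/
/-!
Since `T` shifts degrees by `α ≠ 0`, a homogeneous eigenvector `u ∈ V_γ` with `T u = c u` has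
`c u ∈ V_{α+γ} ∩ V_γ = 0`, so `c = 0`. As the eigenspaces are graded, every eigenvector has a nonzero
homogeneous component in the same eigenspace, hence `0` is the only eigenvalue of `T`. On the
finite-dimensional `T`-invariant subspace spanned by the orbit of `v`, the minimal polynomial of `T`
splits with all roots `0`, so it is a power of `X` and `T` is nilpotent there.
-/

open DirectSum Polynomial Submodule Set

namespace DirectSum

variable {ι R M : Type*} [DecidableEq ι] [Semiring R] [AddCommMonoid M] [Module R M]
  (𝒜 : ι → Submodule R M) [Decomposition 𝒜]

theorem eq_zero_of_mem_of_mem_of_ne {x : M} {i j : ι} (hi : x ∈ 𝒜 i) (hj : x ∈ 𝒜 j)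
    (hij : i ≠ j) : x = 0 :=
  (decompose_of_mem_same 𝒜 hj).symm.trans (decompose_of_mem_ne 𝒜 hi hij)

theorem exists_decompose_ne_zero {x : M} (hx : x ≠ 0) : ∃ i, (decompose 𝒜 x i : M) ≠ 0 := by
  classical
  by_contra! h
  exact hx (by rw [← sum_support_decompose 𝒜 x]; exact Finset.sum_eq_zero fun i _ => h i)

end DirectSum

namespace Module.End

def IsHomogeneousOfDegree {ι R M : Type*} [Add ι] [Semiring R] [AddCommMonoid M] [Module R M]
    (𝒜 : ι → Submodule R M) (f : End R M) (α : ι) : Prop :=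
  ∀ i, ∀ x ∈ 𝒜 i, f x ∈ 𝒜 (α + i)

variable {ι R M : Type*} [DecidableEq ι] [AddMonoid ι] [IsRightCancelAdd ι] [CommRing R]
  [IsDomain R] [AddCommGroup M] [Module R M] [Module.IsTorsionFree R M]
  {𝒜 : ι → Submodule R M} [Decomposition 𝒜]

theorem IsHomogeneousOfDegree.eigenvalue_eq_zero {f : End R M} {α : ι}
    (hf : IsHomogeneousOfDegree 𝒜 f α) (hα : α ≠ 0) {μ : R} {x : M} {i : ι}
    (hx : f.HasEigenvector μ x) (hxi : x ∈ 𝒜 i) : μ = 0 := by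
  have hμx : μ • x = 0 :=
    eq_zero_of_mem_of_mem_of_ne 𝒜 (hx.apply_eq_smul ▸ hf i x hxi)
      (Submodule.smul_mem _ μ hxi) fun h => hα (add_eq_right.mp h)
  exact (smul_eq_zero.mp hμx).resolve_right hx.2

theorem IsHomogeneousOfDegree.hasEigenvalue_eq_zero {f : End R M} {α : ι}
    (hf : IsHomogeneousOfDegree 𝒜 f α) (hα : α ≠ 0)
    (heig : ∀ (c : R) (v : M), f v = c • v → ∀ i : ι,
      f (decompose 𝒜 v i : M) = c • (decompose 𝒜 v i : M))
    {μ : R} (hμ : f.HasEigenvalue μ) : μ = 0 := by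
  obtain ⟨v, hv⟩ := hμ.exists_hasEigenvector
  obtain ⟨i, hi⟩ := exists_decompose_ne_zero 𝒜 hv.2
  exact hf.eigenvalue_eq_zero hα
    ⟨mem_eigenspace_iff.mpr (heig μ v hv.apply_eq_smul i), hi⟩ (decompose 𝒜 v i).2

end Module.End

theorem Polynomial.Monic.eq_X_pow_of_forall_mem_roots_eq_zero {K : Type*} [Field K] [IsAlgClosed K]
    {p : K[X]} (hp : p.Monic) (h : ∀ a ∈ p.roots, a = 0) : p = X ^ p.roots.card := by
  have hroots : p.roots = Multiset.replicate p.roots.card 0 := Multiset.eq_replicate.mpr ⟨rfl, h⟩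
  conv_lhs => rw [(IsAlgClosed.splits p).eq_prod_roots_of_monic hp, hroots]
  simp

namespace Module.End

theorem HasEigenvalue.of_restrict {R M : Type*} [CommRing R] [AddCommGroup M] [Module R M]
    {f : End R M} {p : Submodule R M} (hfp : ∀ x ∈ p, f x ∈ p) {μ : R}
    (h : HasEigenvalue (f.restrict hfp) μ) : f.HasEigenvalue μ := by
  obtain ⟨w, hw⟩ := h.exists_hasEigenvector
  exact hasEigenvalue_of_hasEigenvector
    ⟨mem_eigenspace_iff.mpr (congrArg Subtype.val hw.apply_eq_smul), by simpa using hw.2⟩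

theorem apply_mem_span_range_pow_apply {R M : Type*} [Semiring R] [AddCommMonoid M] [Module R M]
    (f : End R M) (v : M) :
    ∀ x ∈ span R (range fun m : ℕ => (f ^ m) v), f x ∈ span R (range fun m : ℕ => (f ^ m) v) := by
  suffices span R (range fun m : ℕ => (f ^ m) v) ≤ (span R (range fun m : ℕ => (f ^ m) v)).comap f
    from fun x hx => this hx
  rw [span_le]
  rintro _ ⟨m, rfl⟩
  exact subset_span ⟨m + 1, by simp only [pow_succ', mul_apply]⟩

variable {K M : Type*} [Field K] [IsAlgClosed K] [AddCommGroup M] [Module K M]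

theorem isNilpotent_of_forall_hasEigenvalue_eq_zero [FiniteDimensional K M] {f : End K M}
    (hf : ∀ μ, f.HasEigenvalue μ → μ = 0) : IsNilpotent f := by
  obtain ⟨n, hn⟩ : ∃ n : ℕ, minpoly K f = X ^ n :=
    ⟨_, (minpoly.monic (Algebra.IsIntegral.isIntegral f)).eq_X_pow_of_forall_mem_roots_eq_zero
      fun μ hμ => hf μ (hasEigenvalue_iff_isRoot.mpr (isRoot_of_mem_roots hμ))⟩
  exact ⟨n, by simpa [hn] using minpoly.aeval K f⟩

theorem exists_pow_apply_eq_zero_of_forall_hasEigenvalue_eq_zero {f : End K M}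
    (hlf : ∀ v, FiniteDimensional K (span K (range fun m : ℕ => (f ^ m) v)))
    (hf : ∀ μ, f.HasEigenvalue μ → μ = 0) (v : M) : ∃ n : ℕ, (f ^ n) v = 0 := by
  have hW := apply_mem_span_range_pow_apply f v
  have hv : v ∈ span K (range fun m : ℕ => (f ^ m) v) := subset_span ⟨0, by simp⟩
  have : FiniteDimensional K (span K (range fun m : ℕ => (f ^ m) v)) := hlf v
  obtain ⟨n, hn⟩ := isNilpotent_of_forall_hasEigenvalue_eq_zero fun μ hμ =>
    hf μ (HasEigenvalue.of_restrict hW hμ)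
  refine ⟨n, ?_⟩
  rw [pow_restrict] at hn
  simpa using congrArg Subtype.val (LinearMap.congr_fun hn ⟨v, hv⟩)

end Module.End

/-- Over an algebraically closed field, a locally finite linear operator
`T` on a `Γ`-graded vector space `V` which is homogeneous of nonzero degree `α` and
whose eigenspaces are all `Γ`-graded subspaces is locally nilpotent. -/
theorem locallyNilpotent_of_nonzero_degree
    {F : Type*} [Field F] [IsAlgClosed F] {Γ : Type*} [AddCommGroup Γ] [DecidableEq Γ]
    {V : Type*} [AddCommGroup V] [Module F V]
    (𝒱 : Γ → Submodule F V) [DirectSum.Decomposition 𝒱]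
    (T : Module.End F V) (α : Γ) (hα : α ≠ 0)
    (hdeg : ∀ μ : Γ, ∀ v ∈ 𝒱 μ, T v ∈ 𝒱 (α + μ))
    (hlf : ∀ v : V, FiniteDimensional F
      (Submodule.span F (Set.range fun m : ℕ => (T ^ m) v)))
    (heig : ∀ (c : F) (v : V), T v = c • v → ∀ γ : Γ,
      T (DirectSum.decompose 𝒱 v γ : V) = c • (DirectSum.decompose 𝒱 v γ : V)) :
    ∀ v : V, ∃ n : ℕ, (T ^ n) v = 0 :=
  T.exists_pow_apply_eq_zero_of_forall_hasEigenvalue_eq_zero hlf fun _ hμ =>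
    Module.End.IsHomogeneousOfDegree.hasEigenvalue_eq_zero hdeg hα heig hμ
end

section
/- Let F be an algebraically closed field, V an F-vector space, and T₁,…,T_m pairwise commuting locally finite linear operators on V. For λ = (λ₁,…,λ_m) ∈ F^m let V(λ) = {v ∈ V : for each i ∈ {1,…,m} there is N ∈ ℕ with (Tᵢ − λᵢ)^N(v) = 0} be the joint generalized eigenspace. Then V is the internal direct sum V = ⊕_{λ∈F^m} V(λ). -/
/-!
Every vector `v` lies in a finite-dimensional subspace `W` invariant under all the `Tᵢ`: start
from `span {v}` and close it up under one `Tᵢ` at a time. Closing up a finite-dimensional space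
under a locally finite operator keeps it finite-dimensional, and, since the operators commute,
keeps the invariance already achieved. On `W` the simultaneous generalized eigenspaces of the
commuting restrictions span `W` because `F` is algebraically closed, so `v` lies in their sum.
Independence of the joint generalized eigenspaces needs no finiteness at all.
-/

open Set Submodule

namespace Module.End

variable {F V : Type*} [Field F] [AddCommGroup V] [Module F V]

def IsLocallyFinite (f : End F V) : Prop :=
  ∀ v : V, FiniteDimensional F (span F (range fun n : ℕ => (f ^ n) v))

noncomputable def invtClosure (f : End F V) (p : Submodule F V) : Submodule F V :=
  ⨆ n : ℕ, p.map (f ^ n)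

variable {f g : End F V} {p : Submodule F V}

lemma le_invtClosure (f : End F V) (p : Submodule F V) : p ≤ f.invtClosure p :=
  le_iSup_of_le 0 (by rw [pow_zero, one_eq_id, map_id])

lemma invtClosure_mem_invtSubmodule (f : End F V) (p : Submodule F V) :
    f.invtClosure p ∈ f.invtSubmodule := by
  rw [mem_invtSubmodule_iff_map_le, invtClosure, Submodule.map_iSup]
  refine iSup_le fun n => ?_
  rw [← map_comp, ← mul_eq_comp, ← pow_succ']
  exact le_iSup (fun n : ℕ => p.map (f ^ n)) (n + 1)

lemma invtClosure_mem_invtSubmodule_of_commute (hfg : Commute f g) (hp : p ∈ g.invtSubmodule) :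
    f.invtClosure p ∈ g.invtSubmodule := by
  rw [mem_invtSubmodule_iff_map_le] at hp ⊢
  rw [invtClosure, Submodule.map_iSup]
  refine iSup_mono fun n => ?_
  rw [← map_comp, ← mul_eq_comp, ← (hfg.pow_left n).eq, mul_eq_comp, map_comp]
  exact map_mono hp

lemma IsLocallyFinite.finiteDimensional_invtClosure (hf : f.IsLocallyFinite)
    [FiniteDimensional F p] : FiniteDimensional F (f.invtClosure p) := by
  obtain ⟨s, rfl⟩ := (fg_iff_finiteDimensional p).2 ‹_›
  have : ∀ v : V, FiniteDimensional F (span F (range fun n : ℕ => (f ^ n) v)) := hf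
  refine finiteDimensional_of_le (S₂ := ⨆ v : s, span F (range fun n : ℕ => (f ^ n) v)) ?_
  refine iSup_le fun n => ?_
  rw [map_span, span_le]
  rintro _ ⟨v, hv, rfl⟩
  exact mem_iSup_of_mem ⟨v, hv⟩ (subset_span ⟨n, rfl⟩)

lemma exists_finiteDimensional_le_forall_mem_invtSubmodule {ι : Type*} {f : ι → End F V}
    (hcomm : Pairwise fun i j => Commute (f i) (f j)) (hf : ∀ i, (f i).IsLocallyFinite)
    (p : Submodule F V) [FiniteDimensional F p] (s : Finset ι) :
    ∃ W : Submodule F V, p ≤ W ∧ FiniteDimensional F W ∧ ∀ i ∈ s, W ∈ (f i).invtSubmodule := by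
  classical
  induction s using Finset.induction_on with
  | empty => exact ⟨p, le_rfl, ‹_›, by simp⟩
  | insert i s his ih =>
    obtain ⟨W, hpW, hW, hWs⟩ := ih
    refine ⟨(f i).invtClosure W, hpW.trans (le_invtClosure _ W),
      (hf i).finiteDimensional_invtClosure, ?_⟩
    simp only [Finset.mem_insert, forall_eq_or_imp]
    refine ⟨invtClosure_mem_invtSubmodule _ _, fun j hj => ?_⟩
    exact invtClosure_mem_invtSubmodule_of_commute (hcomm (ne_of_mem_of_not_mem hj his).symm)
      (hWs j hj)

theorem iSup_iInf_maxGenEigenspace_eq_top_of_isLocallyFinite [IsAlgClosed F] {ι : Type*}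
    [Finite ι] (f : ι → End F V) (hcomm : Pairwise fun i j => Commute (f i) (f j))
    (hf : ∀ i, (f i).IsLocallyFinite) :
    ⨆ χ : ι → F, ⨅ i, (f i).maxGenEigenspace (χ i) = ⊤ := by
  have := Fintype.ofFinite ι
  refine eq_top_iff.2 fun v _ => ?_
  obtain ⟨W, hvW, hW, hWinv⟩ :=
    exists_finiteDimensional_le_forall_mem_invtSubmodule hcomm hf (span F {v}) Finset.univ
  have hWf (i : ι) : MapsTo (f i) W W :=
    (mem_invtSubmodule_iff_mapsTo _).1 (hWinv i (Finset.mem_univ i))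
  have htop : ⨆ χ : ι → F, ⨅ i, maxGenEigenspace ((f i).restrict (hWf i)) (χ i) = ⊤ :=
    iSup_iInf_maxGenEigenspace_eq_top_of_iSup_maxGenEigenspace_eq_top_of_commute _
      (fun i j hij => LinearMap.restrict_commute (hcomm hij) _ _)
      (fun i => iSup_maxGenEigenspace_eq_top _)
  have hWle : W ≤ ⨆ χ : ι → F, ⨅ i, (f i).maxGenEigenspace (χ i) :=
    calc W = (⊤ : Submodule F W).map W.subtype := by simp
      _ = ⨆ χ : ι → F, W ⊓ ⨅ i, (f i).maxGenEigenspace (χ i) := by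
        simp_rw [← htop, Submodule.map_iSup, W.inf_iInf_maxGenEigenspace_of_forall_mapsTo f hWf]
      _ ≤ _ := iSup_mono fun χ => inf_le_right
  exact hWle (hvW (mem_span_singleton_self v))

end Module.End

/-- If `T₁,…,T_m` are pairwise commuting locally finite linear operators
on a vector space `V` over an algebraically closed field `F`, then `V` is the internal
direct sum of the joint generalized eigenspaces
`V(λ) = {v | ∀ i, ∃ N, (Tᵢ − λᵢ)^N v = 0}`, `λ ∈ F^m`. -/
theorem jointGeneralizedEigenspace_isInternal
    {F : Type*} [Field F] [IsAlgClosed F]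
    {V : Type*} [AddCommGroup V] [Module F V]
    (m : ℕ) [DecidableEq (Fin m → F)] (T : Fin m → Module.End F V)
    (hcomm : ∀ i j, Commute (T i) (T j))
    (hlf : ∀ i, ∀ v : V, FiniteDimensional F
      (Submodule.span F (Set.range fun n : ℕ => ((T i) ^ n) v))) :
    DirectSum.IsInternal (fun lam : Fin m → F =>
      ⨅ i, ⨆ N : ℕ, LinearMap.ker ((T i - lam i • (1 : Module.End F V)) ^ N)) := by
  simp_rw [← Module.End.genEigenspace_nat, Module.End.iSup_genEigenspace_eq,
    DirectSum.isInternal_submodule_iff_iSupIndep_and_iSup_eq_top]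
  exact ⟨Module.End.independent_iInf_maxGenEigenspace_of_forall_mapsTo T
      fun i j μ => Module.End.mapsTo_maxGenEigenspace_of_comm (hcomm j i) μ,
    Module.End.iSup_iInf_maxGenEigenspace_eq_top_of_isLocallyFinite T
      (fun i j _ => hcomm i j) hlf⟩
end

section
/- Let F be an algebraically closed field and V a nonzero F-vector space. Let T₁,…,T_m be pairwise commuting locally finite linear operators on V, and let N₁,…,N_r be locally nilpotent linear operators on V such that each Nⱼ commutes with each Tᵢ and such that for all i,j there are nonzero scalars c_{ij} ∈ Fˣ with Nᵢ∘Nⱼ = c_{ij}·Nⱼ∘Nᵢ. Then there exist a nonzero vector v ∈ V and scalars λ₁,…,λ_m ∈ F such that Tᵢ(v) = λᵢ·v for all i and Nⱼ(v) = 0 for all j; i.e. V contains a common eigenvector of all the operators, on which the locally nilpotent ones act by zero. -/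
section aux

variable {F : Type*} [Field F] [IsAlgClosed F]
  {V : Type*} [AddCommGroup V] [Module F V]

private lemma pow_mem_inv {S : Module.End F V} {W : Submodule F V}
    (hinv : ∀ x ∈ W, S x ∈ W) : ∀ n : ℕ, ∀ x ∈ W, (S ^ n) x ∈ W := by
  intro n
  induction n with
  | zero => intro x hx; simpa using hx
  | succ n ih =>
    intro x hx
    rw [pow_succ', Module.End.mul_apply]
    exact hinv _ (ih x hx)

/-- Key lemma for locally finite operators: an invariant nonzero submodule contains
an eigenvector. -/
private lemma key_lf (S : Module.End F V)
    (hlf : ∀ v : V, FiniteDimensional F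
      (Submodule.span F (Set.range fun n : ℕ => (S ^ n) v)))
    (W : Submodule F V) (hW : W ≠ ⊥) (hinv : ∀ x ∈ W, S x ∈ W) :
    ∃ μ : F, ∃ u : V, u ≠ 0 ∧ u ∈ W ∧ S u = μ • u := by
  obtain ⟨w, hwW, hw0⟩ := Submodule.ne_bot_iff W |>.mp hW
  set U : Submodule F V := Submodule.span F (Set.range fun n : ℕ => (S ^ n) w) with hU
  have hwU : w ∈ U := Submodule.subset_span ⟨0, by simp⟩
  have hUW : U ≤ W := by
    rw [hU, Submodule.span_le]
    rintro _ ⟨n, rfl⟩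
    exact pow_mem_inv (W := W) hinv n w hwW
  have hUinv : ∀ x ∈ U, S x ∈ U := by
    intro x hx
    induction hx using Submodule.span_induction with
    | mem y hy =>
      obtain ⟨n, rfl⟩ := hy
      refine Submodule.subset_span ⟨n + 1, ?_⟩
      show (S ^ (n + 1)) w = S ((S ^ n) w)
      rw [pow_succ', Module.End.mul_apply]
    | zero => simp
    | add y z _ _ hy hz => rw [map_add]; exact U.add_mem hy hz
    | smul a y _ hy => rw [map_smul]; exact U.smul_mem a hy
  haveI : FiniteDimensional F U := hlf w
  haveI : Nontrivial U := Submodule.nontrivial_iff_ne_bot.mpr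
    ((Submodule.ne_bot_iff U).mpr ⟨w, hwU, hw0⟩)
  obtain ⟨μ, hμ⟩ := Module.End.exists_eigenvalue (S.restrict hUinv)
  obtain ⟨u, hu⟩ := hμ.exists_hasEigenvector
  refine ⟨μ, (u : V), ?_, hUW u.2, ?_⟩
  · exact fun h => hu.right (by exact_mod_cast Subtype.ext h)
  · have h1 : (S.restrict hUinv) u = μ • u := hu.apply_eq_smul
    have h2 := congrArg (Subtype.val) h1
    simpa [LinearMap.restrict_apply] using h2

/-- Key lemma for locally nilpotent operators: an invariant nonzero submodule contains
a nonzero kernel vector. -/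
private lemma key_ln (S : Module.End F V)
    (hnil : ∀ v : V, ∃ n : ℕ, (S ^ n) v = 0)
    (W : Submodule F V) (hW : W ≠ ⊥) (hinv : ∀ x ∈ W, S x ∈ W) :
    ∃ u : V, u ≠ 0 ∧ u ∈ W ∧ S u = 0 := by
  obtain ⟨w, hwW, hw0⟩ := Submodule.ne_bot_iff W |>.mp hW
  have hex := hnil w
  classical
  set n := Nat.find hex with hn
  have hn0 : n ≠ 0 := by
    intro h
    have := Nat.find_spec hex
    rw [← hn, h] at this
    simp at this
    exact hw0 this
  have hlt : n - 1 < n := Nat.pred_lt hn0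
  refine ⟨(S ^ (n - 1)) w, Nat.find_min hex hlt, pow_mem_inv hinv _ w hwW, ?_⟩
  have : (S ^ n) w = 0 := Nat.find_spec hex
  calc S ((S ^ (n - 1)) w) = ((S ^ (n - 1 + 1))) w := by
        rw [pow_succ', Module.End.mul_apply]
    _ = 0 := by rw [Nat.sub_add_cancel (Nat.one_le_iff_ne_zero.mpr hn0)]; exact this

end aux

/-- Let `V ≠ 0` be a vector space over an algebraically closed field `F`,
`T₁,…,T_m` pairwise commuting locally finite operators, and `N₁,…,N_r` locally
nilpotent operators commuting with the `Tᵢ` and satisfying `NᵢNⱼ = c_{ij}·NⱼNᵢ` with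
`c_{ij} ≠ 0`.  Then there is a common eigenvector `v ≠ 0` of all the `Tᵢ` with
`Nⱼ(v) = 0` for all `j`. -/
theorem exists_common_eigenvector
    {F : Type*} [Field F] [IsAlgClosed F]
    {V : Type*} [AddCommGroup V] [Module F V] [Nontrivial V]
    (m r : ℕ) (T : Fin m → Module.End F V) (N : Fin r → Module.End F V)
    (hTcomm : ∀ i j, Commute (T i) (T j))
    (hTlf : ∀ i, ∀ v : V, FiniteDimensional F
      (Submodule.span F (Set.range fun n : ℕ => ((T i) ^ n) v)))
    (hNnil : ∀ j, ∀ v : V, ∃ n : ℕ, ((N j) ^ n) v = 0)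
    (hNT : ∀ i j, Commute (T i) (N j))
    (c : Fin r → Fin r → F) (hc : ∀ i j, c i j ≠ 0)
    (hNN : ∀ i j, N i * N j = c i j • (N j * N i)) :
    ∃ v : V, v ≠ 0 ∧ ∃ lam : Fin m → F,
      (∀ i, T i v = lam i • v) ∧ (∀ j, N j v = 0) := by
  classical
  -- Phase 1: handle the locally finite operators one at a time.
  have phase1 : ∀ k : ℕ, ∃ (W : Submodule F V) (lam : Fin m → F),
      W ≠ ⊥ ∧ (∀ i, ∀ x ∈ W, T i x ∈ W) ∧ (∀ j, ∀ x ∈ W, N j x ∈ W) ∧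
      (∀ i : Fin m, (i : ℕ) < k → ∀ x ∈ W, T i x = lam i • x) := by
    intro k
    induction k with
    | zero =>
      refine ⟨⊤, 0, ?_, fun i x _ => trivial, fun j x _ => trivial, fun i hi => by omega⟩
      rw [Submodule.ne_bot_iff]
      obtain ⟨x, hx⟩ := exists_ne (0 : V)
      exact ⟨x, trivial, hx⟩
    | succ k ih =>
      obtain ⟨W, lam, hWb, hWT, hWN, heig⟩ := ih
      by_cases hkm : k < m
      · set i₀ : Fin m := ⟨k, hkm⟩ with hi₀
        obtain ⟨μ, u, hu0, huW, huE⟩ := key_lf (T i₀) (hTlf i₀) W hWb (hWT i₀)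
        set W' : Submodule F V := W ⊓ LinearMap.ker (T i₀ - μ • 1) with hW'
        have hmem : ∀ x, x ∈ W' ↔ x ∈ W ∧ T i₀ x = μ • x := by
          intro x
          simp [hW', Submodule.mem_inf, LinearMap.mem_ker, sub_eq_zero,
            LinearMap.sub_apply, LinearMap.smul_apply, Module.End.one_apply]
        refine ⟨W', Function.update lam i₀ μ, ?_, ?_, ?_, ?_⟩
        · rw [Submodule.ne_bot_iff]
          exact ⟨u, (hmem u).mpr ⟨huW, huE⟩, hu0⟩
        · intro i x hx
          obtain ⟨hxW, hxE⟩ := (hmem x).mp hx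
          refine (hmem _).mpr ⟨hWT i x hxW, ?_⟩
          have hcomm : T i₀ (T i x) = T i (T i₀ x) := by
            have := (hTcomm i₀ i).eq
            calc T i₀ (T i x) = (T i₀ * T i) x := rfl
              _ = (T i * T i₀) x := by rw [this]
              _ = T i (T i₀ x) := rfl
          rw [hcomm, hxE, map_smul]
        · intro j x hx
          obtain ⟨hxW, hxE⟩ := (hmem x).mp hx
          refine (hmem _).mpr ⟨hWN j x hxW, ?_⟩
          have hcomm : T i₀ (N j x) = N j (T i₀ x) := by
            have := (hNT i₀ j).eq
            calc T i₀ (N j x) = (T i₀ * N j) x := rfl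
              _ = (N j * T i₀) x := by rw [this]
              _ = N j (T i₀ x) := rfl
          rw [hcomm, hxE, map_smul]
        · intro i hi x hx
          obtain ⟨hxW, hxE⟩ := (hmem x).mp hx
          by_cases hii : i = i₀
          · subst hii
            rw [Function.update_self]
            exact hxE
          · rw [Function.update_of_ne hii]
            have : (i : ℕ) < k := by
              rcases Nat.lt_succ_iff_lt_or_eq.mp hi with h | h
              · exact h
              · exact absurd (Fin.ext h : i = i₀) hii
            exact heig i this x hxW
      · refine ⟨W, lam, hWb, hWT, hWN, fun i _ x hx => heig i ?_ x hx⟩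
        omega
  obtain ⟨W₀, lam, hW₀b, hW₀T, hW₀N, heig₀⟩ := phase1 m
  -- Phase 2: handle the locally nilpotent operators one at a time.
  have phase2 : ∀ l : ℕ, ∃ W : Submodule F V,
      W ≤ W₀ ∧ W ≠ ⊥ ∧ (∀ i, ∀ x ∈ W, T i x ∈ W) ∧ (∀ j, ∀ x ∈ W, N j x ∈ W) ∧
      (∀ j : Fin r, (j : ℕ) < l → ∀ x ∈ W, N j x = 0) := by
    intro l
    induction l with
    | zero => exact ⟨W₀, le_rfl, hW₀b, hW₀T, hW₀N, fun j hj => by omega⟩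
    | succ l ih =>
      obtain ⟨W, hWle, hWb, hWT, hWN, hker⟩ := ih
      by_cases hlr : l < r
      · set j₀ : Fin r := ⟨l, hlr⟩ with hj₀
        obtain ⟨u, hu0, huW, huK⟩ := key_ln (N j₀) (hNnil j₀) W hWb (hWN j₀)
        set W' : Submodule F V := W ⊓ LinearMap.ker (N j₀) with hW'
        have hmem : ∀ x, x ∈ W' ↔ x ∈ W ∧ N j₀ x = 0 := by
          intro x; simp [hW', Submodule.mem_inf, LinearMap.mem_ker]
        refine ⟨W', le_trans inf_le_left hWle, ?_, ?_, ?_, ?_⟩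
        · rw [Submodule.ne_bot_iff]
          exact ⟨u, (hmem u).mpr ⟨huW, huK⟩, hu0⟩
        · intro i x hx
          obtain ⟨hxW, hxK⟩ := (hmem x).mp hx
          refine (hmem _).mpr ⟨hWT i x hxW, ?_⟩
          have hcomm : N j₀ (T i x) = T i (N j₀ x) := by
            have := (hNT i j₀).eq
            calc N j₀ (T i x) = (N j₀ * T i) x := rfl
              _ = (T i * N j₀) x := by rw [← this]
              _ = T i (N j₀ x) := rfl
          rw [hcomm, hxK, map_zero]
        · intro j x hx
          obtain ⟨hxW, hxK⟩ := (hmem x).mp hx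
          refine (hmem _).mpr ⟨hWN j x hxW, ?_⟩
          have hcomm : N j₀ (N j x) = c j₀ j • N j (N j₀ x) := by
            have := hNN j₀ j
            calc N j₀ (N j x) = (N j₀ * N j) x := rfl
              _ = (c j₀ j • (N j * N j₀)) x := by rw [this]
              _ = c j₀ j • N j (N j₀ x) := rfl
          rw [hcomm, hxK, map_zero, smul_zero]
        · intro j hj x hx
          obtain ⟨hxW, hxK⟩ := (hmem x).mp hx
          by_cases hjj : j = j₀
          · subst hjj; exact hxK
          · have : (j : ℕ) < l := by
              rcases Nat.lt_succ_iff_lt_or_eq.mp hj with h | h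
              · exact h
              · exact absurd (Fin.ext h : j = j₀) hjj
            exact hker j this x hxW
      · refine ⟨W, hWle, hWb, hWT, hWN, fun j _ x hx => hker j ?_ x hx⟩
        omega
  obtain ⟨W, hWle, hWb, _, _, hker⟩ := phase2 r
  obtain ⟨v, hvW, hv0⟩ := (Submodule.ne_bot_iff W).mp hWb
  exact ⟨v, hv0, lam, fun i => heig₀ i i.2 v (hWle hvW), fun j => hker j j.2 v hvW⟩
end

section
/- Let F be a field, Γ an additive abelian group, ε a skew-symmetric bicharacter of Γ, A a Γ-graded associative unital ε-commutative F-algebra, and D a set of homogeneous color derivations of A such that A is graded D-simple. If u ∈ A is a nonzero homogeneous element with ∂(u) ∈ F·u for every ∂ ∈ D (a homogeneous common eigenvector, i.e. root vector), then u is a unit of A. -/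
/-!
The left ideal `A u` is the candidate ideal. Since `u` is homogeneous and `A` is `ε`-commutative,
`u b` and `b u` differ by a scalar for homogeneous `b`, so `A u = u A` is two-sided; it is graded
because it is generated by a homogeneous element, and it is `D`-stable because
`∂(a u) = ∂(a) u + ε(λ, ā) a ∂(u)` with `∂(u) ∈ F u`. As `u ≠ 0`, graded `D`-simplicity forces
`A u = A`, so `u` has a left inverse `v`, and writing `v u = u w` gives a right inverse too.
-/

/-- `d` is a homogeneous color derivation of degree `lam` of the `Γ`-graded algebra `A`
(with grading `𝒜`) relative to the bicharacter `ε`. -/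
def IsHomColorDer {F : Type*} [Field F] {Γ : Type*} [AddCommGroup Γ]
    {A : Type*} [Ring A] [Algebra F A]
    (ε : Γ → Γ → F) (𝒜 : Γ → Submodule F A) (lam : Γ) (d : Module.End F A) : Prop :=
  (∀ μ : Γ, ∀ a ∈ 𝒜 μ, d a ∈ 𝒜 (lam + μ)) ∧
  (∀ (l m : Γ) (a b : A), a ∈ 𝒜 l → b ∈ 𝒜 m →
    d (a * b) = d a * b + ε lam l • (a * d b))

/-- `A` is graded `D`-simple: the only `Γ`-graded two-sided ideals of `A` stable under
all derivations in `D` are `0` and `A`. -/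
def IsGradedDSimple {F : Type*} [Field F] {Γ : Type*} [AddCommGroup Γ] [DecidableEq Γ]
    {A : Type*} [Ring A] [Algebra F A]
    (𝒜 : Γ → Submodule F A) [GradedAlgebra 𝒜] (D : Set (Module.End F A)) : Prop :=
  ∀ I : Submodule F A,
    (∀ (a x : A), x ∈ I → a * x ∈ I ∧ x * a ∈ I) →
    (∀ x ∈ I, ∀ γ : Γ, (DirectSum.decompose 𝒜 x γ : A) ∈ I) →
    (∀ d ∈ D, ∀ x ∈ I, d x ∈ I) →
    I = ⊥ ∨ I = ⊤

section RootVector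

variable {F Γ A : Type*} [Field F] [AddCommGroup Γ] [DecidableEq Γ] [Ring A] [Algebra F A]
  {ε : Γ → Γ → F} {𝒜 : Γ → Submodule F A} [GradedAlgebra 𝒜] {u : A} {γ : Γ}

theorem mul_mem_span_singleton_of_mem_graded
    (hcomm : ∀ (l m : Γ) (a b : A), a ∈ 𝒜 l → b ∈ 𝒜 m → a * b = ε l m • (b * a))
    (hu : u ∈ 𝒜 γ) (b : A) : u * b ∈ Ideal.span {u} := by
  induction b using DirectSum.Decomposition.inductionOn 𝒜 with
  | zero => simp
  | @homogeneous ν b =>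
    rw [hcomm γ ν u b hu b.2, ← smul_mul_assoc]
    exact Ideal.mul_mem_left _ _ (Ideal.mem_span_singleton_self u)
  | add b b' hb hb' => rw [mul_add]; exact add_mem hb hb'

theorem exists_mul_eq_mul_of_mem_graded
    (hcomm : ∀ (l m : Γ) (a b : A), a ∈ 𝒜 l → b ∈ 𝒜 m → a * b = ε l m • (b * a))
    (hu : u ∈ 𝒜 γ) (b : A) : ∃ w, b * u = u * w := by
  induction b using DirectSum.Decomposition.inductionOn 𝒜 with
  | zero => exact ⟨0, by simp⟩
  | @homogeneous ν b => exact ⟨ε ν γ • (b : A), by rw [hcomm ν γ b u b.2 hu, mul_smul_comm]⟩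
  | add b b' hb hb' =>
    obtain ⟨w, hw⟩ := hb
    obtain ⟨w', hw'⟩ := hb'
    exact ⟨w + w', by rw [add_mul, hw, hw', mul_add]⟩

theorem mul_mem_span_singleton_right_of_mem_graded
    (hcomm : ∀ (l m : Γ) (a b : A), a ∈ 𝒜 l → b ∈ 𝒜 m → a * b = ε l m • (b * a))
    (hu : u ∈ 𝒜 γ) {x : A} (hx : x ∈ Ideal.span {u}) (a : A) : x * a ∈ Ideal.span {u} := by
  obtain ⟨b, rfl⟩ := Ideal.mem_span_singleton'.1 hx
  rw [mul_assoc]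
  exact Ideal.mul_mem_left _ b (mul_mem_span_singleton_of_mem_graded hcomm hu a)

theorem IsHomColorDer.apply_mem_span_singleton {lam : Γ} {d : Module.End F A}
    (hd : IsHomColorDer ε 𝒜 lam d) (hu : u ∈ 𝒜 γ) (hdu : ∃ c : F, d u = c • u)
    {x : A} (hx : x ∈ Ideal.span {u}) : d x ∈ Ideal.span {u} := by
  obtain ⟨c, hc⟩ := hdu
  obtain ⟨a, rfl⟩ := Ideal.mem_span_singleton'.1 hx
  clear hx
  induction a using DirectSum.Decomposition.inductionOn 𝒜 with
  | zero => simp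
  | @homogeneous ν a =>
    rw [hd.2 ν γ a u a.2 hu, hc, mul_smul_comm, smul_smul, ← smul_mul_assoc]
    exact add_mem (Ideal.mul_mem_left _ _ (Ideal.mem_span_singleton_self u))
      (Ideal.mul_mem_left _ _ (Ideal.mem_span_singleton_self u))
  | add a a' ha ha' => rw [add_mul, map_add]; exact add_mem ha ha'

end RootVector

theorem isUnit_of_span_singleton_eq_top {R : Type*} [Ring R] {u : R}
    (htop : Ideal.span {u} = ⊤) (hnormal : ∀ b, ∃ w, b * u = u * w) : IsUnit u := by
  obtain ⟨v, hv⟩ := Ideal.mem_span_singleton'.1 (htop ▸ Submodule.mem_top : (1 : R) ∈ _)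
  obtain ⟨w, hw⟩ := hnormal v
  have huw : u * w = 1 := hw ▸ hv
  exact ⟨⟨u, w, huw, left_inv_eq_right_inv hv huw ▸ hv⟩, rfl⟩

theorem rootVector_isUnit_general
    {F : Type*} [Field F] {Γ : Type*} [AddCommGroup Γ] [DecidableEq Γ]
    {A : Type*} [Ring A] [Algebra F A]
    (ε : Γ → Γ → F)
    (𝒜 : Γ → Submodule F A) [GradedAlgebra 𝒜]
    (hcomm : ∀ (l m : Γ) (a b : A), a ∈ 𝒜 l → b ∈ 𝒜 m → a * b = ε l m • (b * a))
    (D : Set (Module.End F A)) (deg : Module.End F A → Γ)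
    (hD : ∀ d ∈ D, IsHomColorDer ε 𝒜 (deg d) d)
    (hsimple : IsGradedDSimple 𝒜 D)
    (u : A) (γ : Γ) (hu : u ∈ 𝒜 γ) (hune : u ≠ 0)
    (hroot : ∀ d ∈ D, ∃ c : F, d u = c • u) :
    IsUnit u := by
  have hhom : (Ideal.span {u}).IsHomogeneous 𝒜 :=
    Ideal.homogeneous_span 𝒜 {u} (by simpa using ⟨γ, hu⟩)
  rcases hsimple ((Ideal.span {u}).restrictScalars F)
      (fun a x hx => ⟨Ideal.mul_mem_left _ a hx,
        mul_mem_span_singleton_right_of_mem_graded hcomm hu hx a⟩)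
      (fun x hx i => hhom i hx)
      (fun d hd x hx => (hD d hd).apply_mem_span_singleton hu (hroot d hd) hx) with h | h
  · rw [Submodule.restrictScalars_eq_bot_iff, Ideal.span_singleton_eq_bot] at h
    exact absurd h hune
  · rw [Submodule.restrictScalars_eq_top_iff] at h
    exact isUnit_of_span_singleton_eq_top h (exists_mul_eq_mul_of_mem_graded hcomm hu)

/-- In a graded `D`-simple `ε`-commutative `Γ`-graded unital algebra,
every nonzero homogeneous common eigenvector (root vector) of the derivations in `D`
is a unit. -/
theorem rootVector_isUnit
    {F : Type*} [Field F] {Γ : Type*} [AddCommGroup Γ] [DecidableEq Γ]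
    {A : Type*} [Ring A] [Algebra F A]
    (ε : Γ → Γ → F)
    (hskew : ∀ l m : Γ, ε l m * ε m l = 1)
    (hmul : ∀ l m n : Γ, ε l (m + n) = ε l m * ε l n)
    (𝒜 : Γ → Submodule F A) [GradedAlgebra 𝒜]
    (hcomm : ∀ (l m : Γ) (a b : A), a ∈ 𝒜 l → b ∈ 𝒜 m → a * b = ε l m • (b * a))
    (D : Set (Module.End F A)) (deg : Module.End F A → Γ)
    (hD : ∀ d ∈ D, IsHomColorDer ε 𝒜 (deg d) d)
    (hsimple : IsGradedDSimple 𝒜 D)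
    (u : A) (γ : Γ) (hu : u ∈ 𝒜 γ) (hune : u ≠ 0)
    (hroot : ∀ d ∈ D, ∃ c : F, d u = c • u) :
    IsUnit u :=
  rootVector_isUnit_general ε 𝒜 hcomm D deg hD hsimple u γ hu hune hroot
end

section
/- Let F be a field, Γ an additive abelian group, ε a skew-symmetric bicharacter of Γ, A a Γ-graded associative unital F-algebra, and D a set of homogeneous color derivations of A. Let χ, ψ : D → F be functions with χ(∂) = ψ(∂) = 0 whenever ∂ ∈ D has nonzero degree. Then for all m,n ∈ ℕ, if u ∈ A(χ)^{(m)} is homogeneous and v ∈ A(ψ)^{(n)}, then u·v ∈ A(χ+ψ)^{(m+n)}. -/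
/-- The generalized weight space `A(χ)^{(m)}`: the set of `u ∈ A` killed by every
composition `(d₁ − χ(d₁))∘⋯∘(d_{m+1} − χ(d_{m+1}))` with `d₁,…,d_{m+1} ∈ D`. -/
def wtSpace {F : Type*} [Field F] {A : Type*} [Ring A] [Algebra F A]
    (D : Set (Module.End F A)) (χ : Module.End F A → F) : ℕ → Set A
  | 0 => {u : A | ∀ d ∈ D, d u - χ d • u = 0}
  | n + 1 => {u : A | ∀ d ∈ D, d u - χ d • u ∈ wtSpace D χ n}

/-!
For `d ∈ D` of degree `λ` and `u ∈ A_γ`, the Leibniz rule gives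
`(d - (χ+ψ)(d))(uv) = ((d - χ(d))u)·v + ε(λ,γ)·u·((d - ψ(d))v)`:
the scalar `ψ(d)` may be moved past `ε(λ,γ)` because `ψ(d) ≠ 0` forces `λ = 0` and `ε(0,γ) = 1`.
Since `χ(d) = 0` unless `λ = 0`, the element `(d - χ(d))u` is again homogeneous, of degree `λ + γ`,
and lies one level lower in `A(χ)`; likewise `(d - ψ(d))v` lies one level lower in `A(ψ)`.
Induction on `m + n` finishes the proof.
-/

section Bicharacter

variable {Γ M : Type*} [AddMonoid Γ] [Monoid M] {ε : Γ → Γ → M}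

theorem bicharacter_apply_zero_right (hskew : ∀ l m : Γ, ε l m * ε m l = 1)
    (hmul : ∀ l m n : Γ, ε l (m + n) = ε l m * ε l n) (l : Γ) : ε l 0 = 1 := by
  have hidem : ε l 0 * ε l 0 = ε l 0 := by rw [← hmul, add_zero]
  calc ε l 0 = ε l 0 * (ε l 0 * ε 0 l) := by rw [hskew, mul_one]
    _ = ε l 0 * ε 0 l := by rw [← mul_assoc, hidem]
    _ = 1 := hskew l 0

theorem bicharacter_apply_zero_left (hskew : ∀ l m : Γ, ε l m * ε m l = 1)
    (hmul : ∀ l m n : Γ, ε l (m + n) = ε l m * ε l n) (l : Γ) : ε 0 l = 1 := by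
  simpa [bicharacter_apply_zero_right hskew hmul l] using hskew 0 l

end Bicharacter

section WeightSpace

variable {F : Type*} [Field F] {A : Type*} [Ring A] [Algebra F A]
  {D : Set (Module.End F A)} {χ : Module.End F A → F}

variable (D χ) in
def wtSubmodule : ℕ → Submodule F A
  | 0 => ⨅ d ∈ D, LinearMap.ker (d - χ d • 1)
  | k + 1 => ⨅ d ∈ D, (wtSubmodule k).comap (d - χ d • 1)

theorem mem_wtSubmodule_zero {u : A} :
    u ∈ wtSubmodule D χ 0 ↔ ∀ d ∈ D, d u - χ d • u = 0 := by
  simp [wtSubmodule]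

theorem mem_wtSubmodule_succ {k : ℕ} {u : A} :
    u ∈ wtSubmodule D χ (k + 1) ↔ ∀ d ∈ D, d u - χ d • u ∈ wtSubmodule D χ k := by
  simp [wtSubmodule]

variable (D χ) in
theorem coe_wtSubmodule : ∀ k, (wtSubmodule D χ k : Set A) = wtSpace D χ k
  | 0 => by ext u; exact mem_wtSubmodule_zero
  | k + 1 => by
    ext u
    change _ ↔ ∀ d ∈ D, d u - χ d • u ∈ wtSpace D χ k
    simp only [← coe_wtSubmodule k, SetLike.mem_coe, mem_wtSubmodule_succ]

end WeightSpace

namespace IsHomColorDer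

variable {F : Type*} [Field F] {Γ : Type*} [AddCommGroup Γ]
  {A : Type*} [Ring A] [Algebra F A] {ε : Γ → Γ → F} {𝒜 : Γ → Submodule F A}
  {lam γ : Γ} {d : Module.End F A} {u : A}

theorem map_mul [DecidableEq Γ] [GradedAlgebra 𝒜] (hd : IsHomColorDer ε 𝒜 lam d) (hu : u ∈ 𝒜 γ) (v : A) :
    d (u * v) = d u * v + ε lam γ • (u * d v) := by
  induction v using DirectSum.Decomposition.inductionOn 𝒜 with
  | zero => simp
  | homogeneous v => exact hd.2 γ _ u v hu v.2
  | add v w hv hw =>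
    rw [mul_add, map_add, hv, hw, map_add, mul_add, mul_add, smul_add]
    abel

theorem sub_smul_mem (hd : IsHomColorDer ε 𝒜 lam d) (hu : u ∈ 𝒜 γ) {c : F}
    (hc : lam ≠ 0 → c = 0) : d u - c • u ∈ 𝒜 (lam + γ) := by
  refine sub_mem (hd.1 γ u hu) ?_
  by_cases hlam : lam = 0
  · rw [hlam, zero_add]; exact Submodule.smul_mem _ _ hu
  · rw [hc hlam, zero_smul]; exact zero_mem _

theorem map_mul_sub_add_smul [DecidableEq Γ] [GradedAlgebra 𝒜] (hd : IsHomColorDer ε 𝒜 lam d)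
    (hu : u ∈ 𝒜 γ) (hε : ε 0 γ = 1) {a b : F} (hb : lam ≠ 0 → b = 0) (v : A) :
    d (u * v) - (a + b) • (u * v) = (d u - a • u) * v + ε lam γ • (u * (d v - b • v)) := by
  have hεb : ε lam γ * b = b := by
    by_cases hlam : lam = 0
    · rw [hlam, hε, one_mul]
    · rw [hb hlam, mul_zero]
  rw [hd.map_mul hu, sub_mul, mul_sub, smul_sub, smul_mul_assoc, mul_smul_comm, smul_smul, hεb,
    add_smul]
  abel

end IsHomColorDer

theorem mul_mem_wtSubmodule_of_add_le {F : Type*} [Field F] {Γ : Type*} [AddCommGroup Γ]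
    [DecidableEq Γ] {A : Type*} [Ring A] [Algebra F A] {ε : Γ → Γ → F}
    (hε : ∀ l, ε 0 l = 1) {𝒜 : Γ → Submodule F A} [GradedAlgebra 𝒜]
    {D : Set (Module.End F A)} {deg : Module.End F A → Γ}
    (hD : ∀ d ∈ D, IsHomColorDer ε 𝒜 (deg d) d) {χ ψ : Module.End F A → F}
    (hχ : ∀ d ∈ D, deg d ≠ 0 → χ d = 0) (hψ : ∀ d ∈ D, deg d ≠ 0 → ψ d = 0) :
    ∀ (k m n : ℕ), m + n ≤ k → ∀ {γ : Γ} {u v : A}, u ∈ 𝒜 γ →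
      u ∈ wtSubmodule D χ m → v ∈ wtSubmodule D ψ n → u * v ∈ wtSubmodule D (χ + ψ) k := by
  intro k
  induction k with
  | zero =>
    intro m n hmn γ u v hu hum hvn
    obtain ⟨rfl, rfl⟩ : m = 0 ∧ n = 0 := by omega
    refine mem_wtSubmodule_zero.2 fun d hd => ?_
    rw [Pi.add_apply, (hD d hd).map_mul_sub_add_smul hu (hε γ) (hψ d hd),
      mem_wtSubmodule_zero.1 hum d hd, mem_wtSubmodule_zero.1 hvn d hd,
      zero_mul, mul_zero, smul_zero, add_zero]
  | succ k ih =>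
    intro m n hmn γ u v hu hum hvn
    refine mem_wtSubmodule_succ.2 fun d hd => ?_
    rw [Pi.add_apply, (hD d hd).map_mul_sub_add_smul hu (hε γ) (hψ d hd)]
    have hleft : (d u - χ d • u) * v ∈ wtSubmodule D (χ + ψ) k := by
      cases m with
      | zero => rw [mem_wtSubmodule_zero.1 hum d hd, zero_mul]; exact zero_mem _
      | succ m =>
        exact ih m n (by omega) ((hD d hd).sub_smul_mem hu (hχ d hd))
          (mem_wtSubmodule_succ.1 hum d hd) hvn
    have hright : u * (d v - ψ d • v) ∈ wtSubmodule D (χ + ψ) k := by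
      cases n with
      | zero => rw [mem_wtSubmodule_zero.1 hvn d hd, mul_zero]; exact zero_mem _
      | succ n => exact ih m n (by omega) hu hum (mem_wtSubmodule_succ.1 hvn d hd)
    exact add_mem hleft (Submodule.smul_mem _ _ hright)

/-- For functions `χ, ψ : D → F` vanishing on derivations of nonzero
degree, a homogeneous `u ∈ A(χ)^{(m)}` and any `v ∈ A(ψ)^{(n)}` satisfy
`u·v ∈ A(χ+ψ)^{(m+n)}`. -/
theorem wtSpace_mul
    {F : Type*} [Field F] {Γ : Type*} [AddCommGroup Γ] [DecidableEq Γ]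
    {A : Type*} [Ring A] [Algebra F A]
    (ε : Γ → Γ → F)
    (hskew : ∀ l m : Γ, ε l m * ε m l = 1)
    (hmul : ∀ l m n : Γ, ε l (m + n) = ε l m * ε l n)
    (𝒜 : Γ → Submodule F A) [GradedAlgebra 𝒜]
    (D : Set (Module.End F A)) (deg : Module.End F A → Γ)
    (hD : ∀ d ∈ D, IsHomColorDer ε 𝒜 (deg d) d)
    (χ ψ : Module.End F A → F)
    (hχ : ∀ d ∈ D, deg d ≠ 0 → χ d = 0)
    (hψ : ∀ d ∈ D, deg d ≠ 0 → ψ d = 0) :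
    ∀ (m n : ℕ) (γ : Γ) (u v : A), u ∈ 𝒜 γ → u ≠ 0 →
      u ∈ wtSpace D χ m → v ∈ wtSpace D ψ n →
      u * v ∈ wtSpace D (χ + ψ) (m + n) := by
  intro m n γ u v hu _ hum hvn
  rw [← coe_wtSubmodule] at hum hvn ⊢
  exact mul_mem_wtSubmodule_of_add_le (bicharacter_apply_zero_left hskew hmul) hD hχ hψ
    (m + n) m n le_rfl hu hum hvn
end

section
/- Let F be a field, Γ an additive abelian group, ε a skew-symmetric bicharacter of Γ, A a Γ-graded associative unital F-algebra, and D a set of homogeneous color derivations of A. Let χ : D → F be a function with χ(∂) = 0 whenever ∂ ∈ D has nonzero degree. Then for every m ∈ ℕ the generalized weight space A(χ)^{(m)} is a Γ-graded subspace of A, i.e. the homogeneous components of any element of A(χ)^{(m)} again lie in A(χ)^{(m)}. -/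
section ShiftingMaps

variable {ι R M N : Type*} [DecidableEq ι]

theorem decompose_apply_add_of_mapsTo_shift [Semiring R] [Add ι] [IsLeftCancelAdd ι]
    [AddCommMonoid M] [Module R M] [AddCommMonoid N] [Module R N]
    (𝒜 : ι → Submodule R M) [DirectSum.Decomposition 𝒜]
    (ℬ : ι → Submodule R N) [DirectSum.Decomposition ℬ]
    (f : M →ₗ[R] N) (lam : ι) (hf : ∀ μ, ∀ a ∈ 𝒜 μ, f a ∈ ℬ (lam + μ)) (u : M) (γ : ι) :
    (DirectSum.decompose ℬ (f u) (lam + γ) : N) = f (DirectSum.decompose 𝒜 u γ) := by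
  induction u using DirectSum.Decomposition.inductionOn 𝒜 with
  | zero => simp
  | @homogeneous μ x =>
      by_cases h : μ = γ
      · subst h
        rw [DirectSum.decompose_of_mem_same ℬ (hf μ x x.2),
          DirectSum.decompose_of_mem_same 𝒜 x.2]
      · rw [DirectSum.decompose_of_mem_ne ℬ (hf μ x x.2) (fun hc => h (add_left_cancel hc)),
          DirectSum.decompose_of_mem_ne 𝒜 x.2 h, map_zero]
  | add a b ha hb =>
      simp only [map_add, DirectSum.decompose_add, DirectSum.add_apply, Submodule.coe_add,
        ha, hb]

theorem decompose_sub_smul_of_mapsTo_shift [Ring R] [AddLeftCancelMonoid ι]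
    [AddCommGroup M] [Module R M] (𝒜 : ι → Submodule R M) [DirectSum.Decomposition 𝒜]
    (d : Module.End R M) (lam : ι) (hd : ∀ μ, ∀ a ∈ 𝒜 μ, d a ∈ 𝒜 (lam + μ))
    (c : R) (hc : lam ≠ 0 → c = 0) (u : M) (γ : ι) :
    (DirectSum.decompose 𝒜 (d u - c • u) (lam + γ) : M)
      = d (DirectSum.decompose 𝒜 u γ) - c • (DirectSum.decompose 𝒜 u γ : M) := by
  rw [DirectSum.decompose_sub, DirectSum.sub_apply, Submodule.coe_sub,
    decompose_apply_add_of_mapsTo_shift 𝒜 𝒜 d lam hd u γ]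
  congr 1
  by_cases h : lam = 0
  · subst h
    rw [zero_add, DirectSum.decompose_smul, DirectSum.smul_apply, Submodule.coe_smul]
  · simp [hc h]

end ShiftingMaps

theorem wtSpace_graded_general
    {F : Type*} [Field F] {Γ : Type*} [AddCommGroup Γ] [DecidableEq Γ]
    {A : Type*} [Ring A] [Algebra F A]
    (ε : Γ → Γ → F)
    (𝒜 : Γ → Submodule F A) [GradedAlgebra 𝒜]
    (D : Set (Module.End F A)) (deg : Module.End F A → Γ)
    (hD : ∀ d ∈ D, IsHomColorDer ε 𝒜 (deg d) d)
    (χ : Module.End F A → F)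
    (hχ : ∀ d ∈ D, deg d ≠ 0 → χ d = 0) :
    ∀ (m : ℕ) (u : A), u ∈ wtSpace D χ m → ∀ γ : Γ,
      (DirectSum.decompose 𝒜 u γ : A) ∈ wtSpace D χ m := by
  have key : ∀ d ∈ D, ∀ (u : A) (γ : Γ),
      d (DirectSum.decompose 𝒜 u γ) - χ d • (DirectSum.decompose 𝒜 u γ : A)
        = DirectSum.decompose 𝒜 (d u - χ d • u) (deg d + γ) := fun d hd u γ =>
    (decompose_sub_smul_of_mapsTo_shift 𝒜 d (deg d) (hD d hd).1 (χ d) (hχ d hd) u γ).symm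
  intro m
  induction m with
  | zero =>
      intro u hu γ d hd
      rw [key d hd, hu d hd, DirectSum.decompose_zero, DirectSum.zero_apply,
        ZeroMemClass.coe_zero]
  | succ n ih =>
      intro u hu γ d hd
      rw [key d hd]
      exact ih _ (hu d hd) _

/-- For a function `χ : D → F` vanishing on derivations of nonzero
degree, each generalized weight space `A(χ)^{(m)}` is a `Γ`-graded subspace of `A`:
the homogeneous components of any of its elements again lie in it. -/
theorem wtSpace_graded
    {F : Type*} [Field F] {Γ : Type*} [AddCommGroup Γ] [DecidableEq Γ]
    {A : Type*} [Ring A] [Algebra F A]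
    (ε : Γ → Γ → F)
    (hskew : ∀ l m : Γ, ε l m * ε m l = 1)
    (hmul : ∀ l m n : Γ, ε l (m + n) = ε l m * ε l n)
    (𝒜 : Γ → Submodule F A) [GradedAlgebra 𝒜]
    (D : Set (Module.End F A)) (deg : Module.End F A → Γ)
    (hD : ∀ d ∈ D, IsHomColorDer ε 𝒜 (deg d) d)
    (χ : Module.End F A → F)
    (hχ : ∀ d ∈ D, deg d ≠ 0 → χ d = 0) :
    ∀ (m : ℕ) (u : A), u ∈ wtSpace D χ m → ∀ γ : Γ,
      (DirectSum.decompose 𝒜 u γ : A) ∈ wtSpace D χ m :=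
  wtSpace_graded_general ε 𝒜 D deg hD χ hχ
end

section
/- Let F be a field, Γ an additive abelian group, ε a skew-symmetric bicharacter of Γ, A a Γ-graded associative unital ε-commutative F-algebra, and D a set of homogeneous color derivations of A. Let χ : D → F satisfy χ(∂) = 0 whenever ∂ has nonzero degree, and let u ∈ A be a homogeneous unit with ∂(u) = χ(∂)·u for all ∂ ∈ D. Then for every function ψ : D → F vanishing on elements of nonzero degree and every n ∈ ℕ, one has u·A(ψ)^{(n)} = A(χ+ψ)^{(n)}. In particular, A(χ)^{(0)} = u·A(0)^{(0)}, where 0 denotes the zero function on D. -/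
/-!
For a homogeneous `u` of degree `μ` with `∂ u = χ(∂) u`, the Leibniz rule gives
`(∂ - χ(∂) - ψ(∂)) (u w) = ε(deg ∂, μ) · u · (∂ - ψ(∂)) w`: the `χ`-terms cancel, and the
`ψ`-term matches because either `ψ(∂) = 0` or `deg ∂ = 0`, where `ε(0, μ) = 1`.
So the bijection `w ↦ u w` intertwines each `∂ - χ(∂) - ψ(∂)` with a nonzero multiple of
`∂ - ψ(∂)`, and by induction on `n` it maps `A(ψ)^{(n)}` onto `A(χ+ψ)^{(n)}`.
-/

open Function

section Bicharacter

variable {Γ M : Type*} [AddZeroClass Γ] [Monoid M] {ε : Γ → Γ → M}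

theorem bichar_apply_zero_right (hskew : ∀ l m, ε l m * ε m l = 1)
    (hmul : ∀ l m n, ε l (m + n) = ε l m * ε l n) (l : Γ) : ε l 0 = 1 := by
  have hidem : ε l 0 * ε l 0 = ε l 0 := by rw [← hmul, add_zero]
  calc ε l 0 = ε l 0 * (ε l 0 * ε 0 l) := by rw [hskew, mul_one]
    _ = 1 := by rw [← mul_assoc, hidem, hskew]

theorem bichar_apply_zero_left (hskew : ∀ l m, ε l m * ε m l = 1)
    (hmul : ∀ l m n, ε l (m + n) = ε l m * ε l n) (m : Γ) : ε 0 m = 1 := by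
  simpa [bichar_apply_zero_right hskew hmul m] using hskew 0 m

end Bicharacter

section ColorDerivation

variable {F Γ A : Type*} [Field F] [AddCommGroup Γ] [DecidableEq Γ] [Ring A] [Algebra F A]
  {ε : Γ → Γ → F} {𝒜 : Γ → Submodule F A} [DirectSum.Decomposition 𝒜]
  {lam l μ : Γ} {d : Module.End F A}

theorem IsHomColorDer.map_mul_of_mem_left (hd : IsHomColorDer ε 𝒜 lam d) {a : A}
    (ha : a ∈ 𝒜 l) (b : A) : d (a * b) = d a * b + ε lam l • (a * d b) := by
  induction b using DirectSum.Decomposition.inductionOn 𝒜 with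
  | zero => simp
  | homogeneous b => exact hd.2 l _ a b ha b.2
  | add b b' hb hb' =>
    rw [mul_add, map_add, hb, hb', map_add, mul_add, mul_add, smul_add]
    abel

theorem IsHomColorDer.map_mul_sub_smul_of_eigen (hd : IsHomColorDer ε 𝒜 lam d) {u : A}
    (hu : u ∈ 𝒜 μ) {c c' : F} (hdu : d u = c • u) (hc' : c' = 0 ∨ ε lam μ = 1) (w : A) :
    d (u * w) - (c + c') • (u * w) = ε lam μ • (u * (d w - c' • w)) := by
  rw [hd.map_mul_of_mem_left hu, hdu, smul_mul_assoc]
  rcases hc' with rfl | hε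
  · simp
  · rw [hε, one_smul, mul_sub, mul_smul_comm]
    module

end ColorDerivation

section WeightSpace

variable {F A : Type*} [Field F] [Ring A] [Algebra F A] {D : Set (Module.End F A)}
  {χ ψ : Module.End F A → F}

theorem smul_mem_wtSpace (c : F) {n : ℕ} {v : A} (hv : v ∈ wtSpace D χ n) :
    c • v ∈ wtSpace D χ n := by
  have hcomm : ∀ (w : A) (d : Module.End F A), d (c • w) - χ d • c • w = c • (d w - χ d • w) :=
    fun w d => by rw [map_smul, smul_sub, smul_comm]
  induction n generalizing v with
  | zero => exact fun d hd => by rw [hcomm, hv d hd, smul_zero]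
  | succ n ih => exact fun d hd => by rw [hcomm]; exact ih (hv d hd)

theorem smul_mem_wtSpace_iff {c : F} (hc : c ≠ 0) {n : ℕ} {v : A} :
    c • v ∈ wtSpace D χ n ↔ v ∈ wtSpace D χ n :=
  ⟨fun h => by simpa [hc] using smul_mem_wtSpace c⁻¹ h, smul_mem_wtSpace c⟩

theorem preimage_wtSpace_of_intertwine (f : A →ₗ[F] A) (hf : Injective f)
    (s : Module.End F A → F) (hs : ∀ d ∈ D, s d ≠ 0)
    (hfd : ∀ d ∈ D, ∀ w, d (f w) - χ d • f w = s d • f (d w - ψ d • w)) (n : ℕ) :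
    f ⁻¹' wtSpace D χ n = wtSpace D ψ n := by
  induction n with
  | zero =>
    ext w
    exact forall₂_congr fun d hd => by
      rw [hfd d hd, smul_eq_zero_iff_right (hs d hd), map_eq_zero_iff f hf]
  | succ n ih =>
    ext w
    exact forall₂_congr fun d hd => by
      rw [hfd d hd, smul_mem_wtSpace_iff (hs d hd), ← Set.mem_preimage, ih]

end WeightSpace

theorem wtSpace_translate_by_unit_general
    {F : Type*} [Field F] {Γ : Type*} [AddCommGroup Γ] [DecidableEq Γ]
    {A : Type*} [Ring A] [Algebra F A]
    (ε : Γ → Γ → F)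
    (hskew : ∀ l m : Γ, ε l m * ε m l = 1)
    (hmul : ∀ l m n : Γ, ε l (m + n) = ε l m * ε l n)
    (𝒜 : Γ → Submodule F A) [GradedAlgebra 𝒜]
    (D : Set (Module.End F A)) (deg : Module.End F A → Γ)
    (hD : ∀ d ∈ D, IsHomColorDer ε 𝒜 (deg d) d)
    (χ : Module.End F A → F)
    (u : Aˣ) (μ : Γ) (hu : (u : A) ∈ 𝒜 μ)
    (hueig : ∀ d ∈ D, d (u : A) = χ d • (u : A)) :
    (∀ ψ : Module.End F A → F, (∀ d ∈ D, deg d ≠ 0 → ψ d = 0) → ∀ n : ℕ,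
      (fun w : A => (u : A) * w) '' wtSpace D ψ n = wtSpace D (χ + ψ) n) ∧
    wtSpace D χ 0 =
      (fun w : A => (u : A) * w) '' wtSpace D (0 : Module.End F A → F) 0 := by
  have htranslate : ∀ ψ : Module.End F A → F, (∀ d ∈ D, deg d ≠ 0 → ψ d = 0) → ∀ n : ℕ,
      (fun w : A => (u : A) * w) '' wtSpace D ψ n = wtSpace D (χ + ψ) n := by
    intro ψ hψ n
    have hψ' : ∀ d ∈ D, ψ d = 0 ∨ ε (deg d) μ = 1 := fun d hd => by
      by_cases h0 : deg d = 0
      · exact .inr (h0 ▸ bichar_apply_zero_left hskew hmul μ)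
      · exact .inl (hψ d hd h0)
    have hpre := preimage_wtSpace_of_intertwine (LinearMap.mulLeft F (u : A))
      u.isUnit.mul_right_injective (fun d => ε (deg d) μ)
      (fun d _ => left_ne_zero_of_mul_eq_one (hskew _ _))
      (fun d hd => (hD d hd).map_mul_sub_smul_of_eigen hu (hueig d hd) (hψ' d hd)) n
    rw [← hpre]
    exact Set.image_preimage_eq _ (Units.mulLeft u).surjective
  refine ⟨htranslate, ?_⟩
  simpa using (htranslate 0 (fun _ _ _ => rfl) 0).symm

/-- If `u` is a homogeneous unit with `∂(u) = χ(∂)·u` for all `∂ ∈ D`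
(`χ` vanishing on derivations of nonzero degree), then `u·A(ψ)^{(n)} = A(χ+ψ)^{(n)}`
for every `ψ` vanishing on derivations of nonzero degree and every `n`; in particular
`A(χ)^{(0)} = u·A(0)^{(0)}`. -/
theorem wtSpace_translate_by_unit
    {F : Type*} [Field F] {Γ : Type*} [AddCommGroup Γ] [DecidableEq Γ]
    {A : Type*} [Ring A] [Algebra F A]
    (ε : Γ → Γ → F)
    (hskew : ∀ l m : Γ, ε l m * ε m l = 1)
    (hmul : ∀ l m n : Γ, ε l (m + n) = ε l m * ε l n)
    (𝒜 : Γ → Submodule F A) [GradedAlgebra 𝒜]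
    (hcomm : ∀ (l m : Γ) (a b : A), a ∈ 𝒜 l → b ∈ 𝒜 m → a * b = ε l m • (b * a))
    (D : Set (Module.End F A)) (deg : Module.End F A → Γ)
    (hD : ∀ d ∈ D, IsHomColorDer ε 𝒜 (deg d) d)
    (χ : Module.End F A → F)
    (hχ : ∀ d ∈ D, deg d ≠ 0 → χ d = 0)
    (u : Aˣ) (μ : Γ) (hu : (u : A) ∈ 𝒜 μ) (hune : (u : A) ≠ 0)
    (hueig : ∀ d ∈ D, d (u : A) = χ d • (u : A)) :
    (∀ ψ : Module.End F A → F, (∀ d ∈ D, deg d ≠ 0 → ψ d = 0) → ∀ n : ℕ,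
      (fun w : A => (u : A) * w) '' wtSpace D ψ n = wtSpace D (χ + ψ) n) ∧
    wtSpace D χ 0 =
      (fun w : A => (u : A) * w) '' wtSpace D (0 : Module.End F A → F) 0 :=
  wtSpace_translate_by_unit_general ε hskew hmul 𝒜 D deg hD χ u μ hu hueig
end

section
/- Let F be a field, Γ an additive abelian group, ε a skew-symmetric bicharacter of Γ, A a Γ-graded associative unital ε-commutative F-algebra, and D a set of homogeneous color derivations of A such that A is graded D-simple. Let E = {w ∈ A : ∂(w) = 0 for all ∂ ∈ D}. Then E is a Γ-graded unital subalgebra of A, every nonzero homogeneous element of E is a unit of A whose inverse again lies in E, and E₀ = E ∩ A₀ is a field (a field extension of F). -/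
open DirectSum

theorem bichar_apply_zero {M Γ : Type*} [Monoid M] [AddZeroClass Γ] {ε : Γ → Γ → M}
    (hskew : ∀ l m : Γ, ε l m * ε m l = 1) (hmul : ∀ l m n : Γ, ε l (m + n) = ε l m * ε l n)
    (l : Γ) : ε l 0 = 1 :=
  calc ε l 0 = ε l 0 * (ε l 0 * ε 0 l) := by rw [hskew, mul_one]
    _ = ε l (0 + 0) * ε 0 l := by rw [hmul, mul_assoc]
    _ = 1 := by rw [add_zero, hskew]

section

variable {F : Type*} [Field F] {Γ : Type*} [DecidableEq Γ]
  {A : Type*} [Ring A] [Algebra F A] {ε : Γ → Γ → F} {𝒜 : Γ → Submodule F A}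

section Commutation

variable {γ : Γ} {w : A}

theorem exists_mul_eq_mul_of_mem [Decomposition 𝒜]
    (hcomm : ∀ (l m : Γ) (a b : A), a ∈ 𝒜 l → b ∈ 𝒜 m → a * b = ε l m • (b * a))
    (hw : w ∈ 𝒜 γ) (a : A) : ∃ b, w * a = b * w := by
  induction a using Decomposition.inductionOn 𝒜 with
  | zero => exact ⟨0, by rw [mul_zero, zero_mul]⟩
  | @homogeneous i a => exact ⟨ε γ i • (a : A), by rw [hcomm γ i w a hw a.2, smul_mul_assoc]⟩
  | add a a' ha ha' =>
    obtain ⟨b, hb⟩ := ha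
    obtain ⟨b', hb'⟩ := ha'
    exact ⟨b + b', by rw [mul_add, hb, hb', add_mul]⟩

theorem exists_mul_eq_mul_of_mem' [Decomposition 𝒜]
    (hcomm : ∀ (l m : Γ) (a b : A), a ∈ 𝒜 l → b ∈ 𝒜 m → a * b = ε l m • (b * a))
    (hw : w ∈ 𝒜 γ) (a : A) : ∃ b, a * w = w * b := by
  induction a using Decomposition.inductionOn 𝒜 with
  | zero => exact ⟨0, by rw [mul_zero, zero_mul]⟩
  | @homogeneous i a => exact ⟨ε i γ • (a : A), by rw [hcomm i γ a w a.2 hw, mul_smul_comm]⟩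
  | add a a' ha ha' =>
    obtain ⟨b, hb⟩ := ha
    obtain ⟨b', hb'⟩ := ha'
    exact ⟨b + b', by rw [add_mul, hb, hb', mul_add]⟩

end Commutation

variable [AddCommGroup Γ]

theorem mem_neg_of_mul_eq_one [GradedAlgebra 𝒜] {γ : Γ} {w v : A} (hw : w ∈ 𝒜 γ)
    (hwv : w * v = 1) (hvw : v * w = 1) : v ∈ 𝒜 (-γ) := by
  set p : A := (decompose 𝒜 v (-γ) : A)
  have hwp : w * p = 1 := by
    rw [← coe_decompose_mul_add_of_left_mem 𝒜 hw, add_neg_cancel, hwv,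
      decompose_of_mem_same 𝒜 SetLike.GradedOne.one_mem]
  have hvp : v = p := calc
    v = v * (w * p) := by rw [hwp, mul_one]
    _ = p := by rw [← mul_assoc, hvw, one_mul]
  exact hvp ▸ SetLike.coe_mem _

namespace IsHomColorDer

variable {lam : Γ} {d : Module.End F A}

theorem map_one [GradedAlgebra 𝒜] (hd : IsHomColorDer ε 𝒜 lam d) (hε : ε lam 0 = 1) :
    d 1 = 0 := by
  have h := hd.2 0 0 1 1 SetLike.GradedOne.one_mem SetLike.GradedOne.one_mem
  rw [mul_one, one_mul, mul_one, hε, one_smul] at h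
  exact left_eq_add.mp h

theorem coe_decompose_map [Decomposition 𝒜] (hd : IsHomColorDer ε 𝒜 lam d) (w : A) (γ : Γ) :
    (decompose 𝒜 (d w) (lam + γ) : A) = d (decompose 𝒜 w γ) := by
  induction w using Decomposition.inductionOn 𝒜 with
  | zero => simp
  | @homogeneous i w =>
    by_cases h : i = γ
    · subst h
      rw [decompose_of_mem_same 𝒜 (hd.1 i w w.2), decompose_of_mem_same 𝒜 w.2]
    · rw [decompose_of_mem_ne 𝒜 (hd.1 i w w.2) (fun h' => h (add_left_cancel h')),
        decompose_of_mem_ne 𝒜 w.2 h, map_zero]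
  | add w w' hw hw' =>
    simp only [map_add, decompose_add, DirectSum.add_apply, Submodule.coe_add, hw, hw']

theorem map_decompose_eq_zero [Decomposition 𝒜] (hd : IsHomColorDer ε 𝒜 lam d) {w : A}
    (hw : d w = 0) (γ : Γ) : d (decompose 𝒜 w γ) = 0 := by
  rw [← hd.coe_decompose_map, hw, decompose_zero, DirectSum.zero_apply, Submodule.coe_zero]

theorem map_mul_of_map_eq_zero [Decomposition 𝒜] (hd : IsHomColorDer ε 𝒜 lam d) {τ : Γ}
    {u : A} (hu : u ∈ 𝒜 τ) (hdu : d u = 0) (x : A) : d (x * u) = d x * u := by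
  induction x using Decomposition.inductionOn 𝒜 with
  | zero => rw [zero_mul, map_zero, zero_mul]
  | @homogeneous i x => rw [hd.2 i τ x u x.2 hu, hdu, mul_zero, smul_zero, add_zero]
  | add x x' hx hx' => rw [add_mul, map_add, hx, hx', map_add, add_mul]

theorem map_mul_eq_zero [Decomposition 𝒜] (hd : IsHomColorDer ε 𝒜 lam d) {a b : A}
    (ha : d a = 0) (hb : d b = 0) : d (a * b) = 0 := by
  classical
  rw [← sum_support_decompose 𝒜 b, Finset.mul_sum, map_sum]
  refine Finset.sum_eq_zero fun γ _ => ?_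
  rw [hd.map_mul_of_map_eq_zero (SetLike.coe_mem _) (hd.map_decompose_eq_zero hb γ), ha,
    zero_mul]

end IsHomColorDer

variable [GradedAlgebra 𝒜] {D : Set (Module.End F A)} {deg : Module.End F A → Γ}

def constantsSubalgebra (hD : ∀ d ∈ D, IsHomColorDer ε 𝒜 (deg d) d) (hε : ∀ l, ε l 0 = 1) :
    Subalgebra F A where
  carrier := {w | ∀ d ∈ D, d w = 0}
  mul_mem' ha hb d hd := (hD d hd).map_mul_eq_zero (ha d hd) (hb d hd)
  one_mem' d hd := (hD d hd).map_one (hε _)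
  add_mem' ha hb d hd := by rw [map_add, ha d hd, hb d hd, add_zero]
  zero_mem' d _ := map_zero d
  algebraMap_mem' c d hd := by
    rw [Algebra.algebraMap_eq_smul_one, map_smul, (hD d hd).map_one (hε _), smul_zero]

namespace IsGradedDSimple

variable {γ : Γ} {w : A}

theorem exists_mul_eq_one (hsimple : IsGradedDSimple 𝒜 D)
    (hcomm : ∀ (l m : Γ) (a b : A), a ∈ 𝒜 l → b ∈ 𝒜 m → a * b = ε l m • (b * a))
    (hD : ∀ d ∈ D, IsHomColorDer ε 𝒜 (deg d) d)
    (hw : w ∈ 𝒜 γ) (hwD : ∀ d ∈ D, d w = 0) (hw0 : w ≠ 0) : ∃ v, v * w = 1 := by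
  set I := LinearMap.range (LinearMap.mulRight F w)
  have hideal : ∀ a x, x ∈ I → a * x ∈ I ∧ x * a ∈ I := by
    rintro a _ ⟨y, rfl⟩
    obtain ⟨b, hb⟩ := exists_mul_eq_mul_of_mem hcomm hw a
    exact ⟨⟨a * y, by simp only [LinearMap.mulRight_apply, mul_assoc]⟩, ⟨y * b, by
      simp only [LinearMap.mulRight_apply, mul_assoc, hb]⟩⟩
  have hgraded : ∀ x ∈ I, ∀ γ', (decompose 𝒜 x γ' : A) ∈ I := by
    rintro _ ⟨y, rfl⟩ γ'
    refine ⟨decompose 𝒜 y (γ' - γ), ?_⟩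
    rw [LinearMap.mulRight_apply, LinearMap.mulRight_apply,
      ← coe_decompose_mul_add_of_right_mem 𝒜 hw, sub_add_cancel]
  have hstable : ∀ d ∈ D, ∀ x ∈ I, d x ∈ I := by
    rintro d hd _ ⟨y, rfl⟩
    exact ⟨d y, ((hD d hd).map_mul_of_map_eq_zero hw (hwD d hd) y).symm⟩
  rcases hsimple I hideal hgraded hstable with hI | hI
  · exact absurd ((Submodule.eq_bot_iff I).1 hI w ⟨1, one_mul w⟩) hw0
  · exact LinearMap.mem_range.1 (hI ▸ Submodule.mem_top : (1 : A) ∈ I)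

theorem eq_zero_of_mul_eq_zero (hsimple : IsGradedDSimple 𝒜 D)
    (hcomm : ∀ (l m : Γ) (a b : A), a ∈ 𝒜 l → b ∈ 𝒜 m → a * b = ε l m • (b * a))
    (hD : ∀ d ∈ D, IsHomColorDer ε 𝒜 (deg d) d)
    (hw : w ∈ 𝒜 γ) (hwD : ∀ d ∈ D, d w = 0) (hw0 : w ≠ 0) {x : A} (hx : x * w = 0) :
    x = 0 := by
  set L := LinearMap.ker (LinearMap.mulRight F w)
  have hmem : ∀ x, x ∈ L ↔ x * w = 0 := fun x => LinearMap.mem_ker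
  have hideal : ∀ a x, x ∈ L → a * x ∈ L ∧ x * a ∈ L := by
    intro a x hx
    obtain ⟨b, hb⟩ := exists_mul_eq_mul_of_mem' hcomm hw a
    rw [hmem] at hx
    rw [hmem, hmem, mul_assoc, hx, mul_assoc, hb, ← mul_assoc, hx, mul_zero, zero_mul]
    exact ⟨rfl, rfl⟩
  have hgraded : ∀ x ∈ L, ∀ γ', (decompose 𝒜 x γ' : A) ∈ L := by
    intro x hx γ'
    rw [hmem, ← coe_decompose_mul_add_of_right_mem 𝒜 hw, (hmem x).1 hx, decompose_zero,
      DirectSum.zero_apply, Submodule.coe_zero]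
  have hstable : ∀ d ∈ D, ∀ x ∈ L, d x ∈ L := by
    intro d hd x hx
    rw [hmem, ← (hD d hd).map_mul_of_map_eq_zero hw (hwD d hd), (hmem x).1 hx, map_zero]
  rcases hsimple L hideal hgraded hstable with hL | hL
  · exact (Submodule.eq_bot_iff L).1 hL x hx
  · exact absurd (one_mul w ▸ (hmem 1).1 (hL ▸ Submodule.mem_top)) hw0

theorem exists_constant_inverse (hsimple : IsGradedDSimple 𝒜 D)
    (hcomm : ∀ (l m : Γ) (a b : A), a ∈ 𝒜 l → b ∈ 𝒜 m → a * b = ε l m • (b * a))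
    (hD : ∀ d ∈ D, IsHomColorDer ε 𝒜 (deg d) d) (hε : ∀ l, ε l 0 = 1)
    (hw : w ∈ 𝒜 γ) (hwD : ∀ d ∈ D, d w = 0) (hw0 : w ≠ 0) :
    ∃ v, (∀ d ∈ D, d v = 0) ∧ w * v = 1 ∧ v * w = 1 := by
  obtain ⟨v, hvw⟩ := hsimple.exists_mul_eq_one hcomm hD hw hwD hw0
  have hcancel {x : A} : x * w = 0 → x = 0 := hsimple.eq_zero_of_mul_eq_zero hcomm hD hw hwD hw0
  refine ⟨v, fun d hd => hcancel ?_, sub_eq_zero.1 (hcancel ?_) |>.symm, hvw⟩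
  · rw [← (hD d hd).map_mul_of_map_eq_zero hw (hwD d hd), hvw, (hD d hd).map_one (hε _)]
  · rw [sub_mul, mul_assoc, hvw, one_mul, mul_one, sub_self]

theorem isField_constantsSubalgebra_inf_gradeZero [Nontrivial A] (hsimple : IsGradedDSimple 𝒜 D)
    (hcomm : ∀ (l m : Γ) (a b : A), a ∈ 𝒜 l → b ∈ 𝒜 m → a * b = ε l m • (b * a))
    (hD : ∀ d ∈ D, IsHomColorDer ε 𝒜 (deg d) d) (hε : ∀ l, ε l 0 = 1) :
    IsField ↥(constantsSubalgebra hD hε ⊓ SetLike.GradeZero.subalgebra 𝒜) where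
  exists_pair_ne := exists_pair_ne _
  mul_comm a b := Subtype.ext <| by
    rw [MulMemClass.coe_mul, MulMemClass.coe_mul, hcomm 0 0 _ _ a.2.2 b.2.2, hε, one_smul]
  mul_inv_cancel {a} ha := by
    obtain ⟨v, hvD, hav, hva⟩ := hsimple.exists_constant_inverse hcomm hD hε a.2.2 a.2.1
      (fun h => ha (Subtype.ext h))
    have hv0 : v ∈ 𝒜 0 := neg_zero (G := Γ) ▸ mem_neg_of_mul_eq_one a.2.2 hav hva
    exact ⟨⟨v, hvD, hv0⟩, Subtype.ext hav⟩

end IsGradedDSimple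

end

/-- For a graded `D`-simple `ε`-commutative `Γ`-graded unital algebra
`A`, the set `E = {w | ∂(w) = 0 ∀ ∂ ∈ D}` of `D`-constants is a `Γ`-graded unital
subalgebra of `A`, every nonzero homogeneous element of `E` is a unit of `A` with
inverse in `E`, and `E₀ = E ∩ A₀` is a field (a field extension of `F`). -/
theorem constants_graded_field
    {F : Type*} [Field F] {Γ : Type*} [AddCommGroup Γ] [DecidableEq Γ]
    {A : Type*} [Ring A] [Algebra F A] [Nontrivial A]
    (ε : Γ → Γ → F)
    (hskew : ∀ l m : Γ, ε l m * ε m l = 1)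
    (hmul : ∀ l m n : Γ, ε l (m + n) = ε l m * ε l n)
    (𝒜 : Γ → Submodule F A) [GradedAlgebra 𝒜]
    (hcomm : ∀ (l m : Γ) (a b : A), a ∈ 𝒜 l → b ∈ 𝒜 m → a * b = ε l m • (b * a))
    (D : Set (Module.End F A)) (deg : Module.End F A → Γ)
    (hD : ∀ d ∈ D, IsHomColorDer ε 𝒜 (deg d) d)
    (hsimple : IsGradedDSimple 𝒜 D) :
    (∃ S : Subalgebra F A, (S : Set A) = {w : A | ∀ d ∈ D, d w = 0}) ∧
    (∀ w : A, (∀ d ∈ D, d w = 0) → ∀ γ : Γ,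
      ∀ d ∈ D, d (DirectSum.decompose 𝒜 w γ : A) = 0) ∧
    (∀ (γ : Γ) (w : A), (∀ d ∈ D, d w = 0) → w ∈ 𝒜 γ → w ≠ 0 →
      ∃ v : A, (∀ d ∈ D, d v = 0) ∧ w * v = 1 ∧ v * w = 1) ∧
    (∃ S₀ : Subalgebra F A,
      (S₀ : Set A) = {w : A | (∀ d ∈ D, d w = 0) ∧ w ∈ 𝒜 (0 : Γ)} ∧
      IsField S₀) := by
  have hε := bichar_apply_zero hskew hmul
  exact ⟨⟨constantsSubalgebra hD hε, rfl⟩,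
    fun w hw γ d hd => (hD d hd).map_decompose_eq_zero (hw d hd) γ,
    fun γ w hw hwγ hw0 => hsimple.exists_constant_inverse hcomm hD hε hwγ hw hw0,
    ⟨_, rfl, hsimple.isField_constantsSubalgebra_inf_gradeZero hcomm hD hε⟩⟩
end

section
/- Let F be an algebraically closed field of characteristic zero, G an additive abelian group, and ε : G × G → Fˣ a skew-symmetric bicharacter of G such that ε(a,a) = 1 for all a ∈ G. Let f : G × G → Fˣ be a map satisfying f(a,b) = ε(a,b)·f(b,a), f(a,0) = 1, and f(a,b)·f(a+b,c) = f(b,c)·f(a,b+c) for all a,b,c ∈ G. Then there exists a map h : G → Fˣ with h(0) = 1 such that the rescaled map f'(a,b) := h(a)·h(b)·h(a+b)⁻¹·f(a,b) satisfies f'(a,b)² = ε(a,b) for all a,b ∈ G (i.e. f is cohomologous to a square root of ε). -/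
/-! The symmetric part `s(a,b) = f(a,b) f(b,a)` of `f` is a symmetric normalized 2-cocycle,
so it defines an abelian extension of `G` by `Fˣ`. Since `Fˣ` is divisible, hence an injective
`ℤ`-module, this extension splits, i.e. `s` is the coboundary of some `k : G → Fˣ`. Because
`f(a,b)² = ε(a,b) s(a,b)`, rescaling `f` by a pointwise square root `h` of `k⁻¹` kills `s` and
leaves a square root of `ε`. -/

structure SymmCocycle (G A : Type*) [AddCommGroup G] [AddCommGroup A] where
  toFun : G → G → A
  symm' : ∀ a b, toFun a b = toFun b a
  map_zero_right' : ∀ a, toFun a 0 = 0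
  cocycle' : ∀ a b c, toFun a b + toFun (a + b) c = toFun b c + toFun a (b + c)

namespace SymmCocycle

variable {G A : Type*} [AddCommGroup G] [AddCommGroup A] (s : SymmCocycle G A)

instance : CoeFun (SymmCocycle G A) fun _ => G → G → A := ⟨toFun⟩

theorem symm (a b : G) : s a b = s b a := s.symm' a b

theorem map_zero_right (a : G) : s a 0 = 0 := s.map_zero_right' a

theorem map_zero_left (b : G) : s 0 b = 0 := by rw [symm, map_zero_right]

theorem cocycle (a b c : G) : s a b + s (a + b) c = s b c + s a (b + c) := s.cocycle' a b c

/-- The extension `0 → A → s.Ext → G → 0` classified by `s`. -/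
@[ext]
structure Ext (_ : SymmCocycle G A) where
  fst : A
  snd : G

namespace Ext

variable {s}

instance : Zero s.Ext := ⟨⟨0, 0⟩⟩

instance : Add s.Ext := ⟨fun x y => ⟨x.fst + y.fst + s x.snd y.snd, x.snd + y.snd⟩⟩

instance : Neg s.Ext := ⟨fun x => ⟨-x.fst - s x.snd (-x.snd), -x.snd⟩⟩

@[simp] theorem zero_fst : (0 : s.Ext).fst = 0 := rfl
@[simp] theorem zero_snd : (0 : s.Ext).snd = 0 := rfl
@[simp] theorem add_fst (x y : s.Ext) : (x + y).fst = x.fst + y.fst + s x.snd y.snd := rfl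
@[simp] theorem add_snd (x y : s.Ext) : (x + y).snd = x.snd + y.snd := rfl
@[simp] theorem neg_fst (x : s.Ext) : (-x).fst = -x.fst - s x.snd (-x.snd) := rfl
@[simp] theorem neg_snd (x : s.Ext) : (-x).snd = -x.snd := rfl

instance : AddCommGroup s.Ext :=
  { AddGroup.ofLeftAxioms
      (fun x y z => by
        ext
        · simp only [add_fst, add_snd]
          linear_combination (norm := abel) s.cocycle x.snd y.snd z.snd
        · exact add_assoc _ _ _)
      (fun x => by ext <;> simp [map_zero_left])
      (fun x => by
        ext
        · simp only [add_fst, neg_fst, neg_snd, s.symm (-x.snd), zero_fst]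
          abel
        · exact neg_add_cancel x.snd) with
    add_comm := fun x y => by ext <;> simp [add_comm, s.symm x.snd] }

end Ext

def inl : A →+ s.Ext where
  toFun a := ⟨a, 0⟩
  map_zero' := rfl
  map_add' a b := by ext <;> simp [map_zero_right]

theorem inl_injective : Function.Injective s.inl := fun _ _ h => congrArg Ext.fst h

def sect (a : G) : s.Ext := ⟨0, a⟩

theorem sect_add_sect (a b : G) : s.sect a + s.sect b = s.inl (s a b) + s.sect (a + b) := by
  ext <;> simp [sect, inl, map_zero_left]

/-- A retraction of `inl`, which exists because `A` is injective, evaluated on `sect`. -/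
theorem exists_coboundary [DivisibleBy A ℤ] :
    ∃ k : G → A, ∀ a b, s a b + k (a + b) = k a + k b := by
  obtain ⟨r, hr⟩ := (Module.Baer.of_divisible A).extension_property_addMonoidHom s.inl
    s.inl_injective (AddMonoidHom.id A)
  refine ⟨fun a => r (s.sect a), fun a b => ?_⟩
  rw [← map_add, sect_add_sect, map_add, ← AddMonoidHom.comp_apply, hr, AddMonoidHom.id_apply]

end SymmCocycle

instance Additive.divisibleByInt {M : Type*} [Group M] [RootableBy M ℤ] :
    DivisibleBy (Additive M) ℤ where
  div a n := .ofMul (RootableBy.root a.toMul n)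
  div_zero _ := congrArg Additive.ofMul (RootableBy.root_zero _)
  div_cancel _ hn := congrArg Additive.ofMul (RootableBy.root_cancel _ hn)

noncomputable instance IsAlgClosed.rootableByUnits {F : Type*} [Field F] [IsAlgClosed F] :
    RootableBy Fˣ ℕ :=
  rootableByOfPowLeftSurj _ _ fun {n} hn x => by
    obtain ⟨z, hz⟩ := IsAlgClosed.exists_pow_nat_eq (x : F) (Nat.pos_of_ne_zero hn)
    have hz0 : z ≠ 0 := by rintro rfl; exact x.ne_zero (by rw [← hz, zero_pow hn])
    exact ⟨Units.mk0 z hz0, Units.ext hz⟩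

section

variable {G M : Type*} [AddCommGroup G]

theorem exists_sqrt_of_map_zero [Monoid M] [RootableBy M ℕ] (k : G → M) (hk0 : k 0 = 1) :
    ∃ h : G → M, h 0 = 1 ∧ ∀ a, h a ^ 2 = k a := by
  classical
  refine ⟨Function.update (fun a => RootableBy.root (k a) 2) 0 1, by simp, fun a => ?_⟩
  rcases eq_or_ne a 0 with rfl | ha
  · simp [hk0]
  · simp [ha, RootableBy.root_cancel]

variable [CommGroup M]

theorem exists_mul_coboundary_of_symm [RootableBy M ℕ] (s : G → G → M)
    (hsymm : ∀ a b, s a b = s b a) (hs0 : ∀ a, s a 0 = 1)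
    (hcoc : ∀ a b c, s a b * s (a + b) c = s b c * s a (b + c)) :
    ∃ k : G → M, ∀ a b, s a b * k (a + b) = k a * k b := by
  let _ := Group.rootableByIntOfRootableByNat M
  obtain ⟨k, hk⟩ := SymmCocycle.exists_coboundary
    ⟨fun a b => .ofMul (s a b), fun a b => congrArg _ (hsymm a b),
      fun a => congrArg _ (hs0 a), fun a b c => congrArg Additive.ofMul (hcoc a b c)⟩
  exact ⟨fun a => (k a).toMul, fun a b => congrArg Additive.toMul (hk a b)⟩

variable {f : G → G → M} (hcoc : ∀ a b c, f a b * f (a + b) c = f b c * f a (b + c))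
include hcoc

theorem cocycle_map_zero_left (hf0 : ∀ a, f a 0 = 1) (a : G) : f 0 a = 1 := by
  simpa [hf0] using (hcoc a 0 a).symm

theorem cocycle_symmPart (a b c : G) :
    f a b * f b a * (f (a + b) c * f c (a + b)) =
      f b c * f c b * (f a (b + c) * f (b + c) a) := by
  have h := hcoc c b a
  rw [add_comm c b, add_comm b a] at h
  calc f a b * f b a * (f (a + b) c * f c (a + b))
      = f a b * f (a + b) c * (f b a * f c (a + b)) := mul_mul_mul_comm _ _ _ _
    _ = f b c * f a (b + c) * (f c b * f (b + c) a) := by rw [hcoc, ← h]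
    _ = f b c * f c b * (f a (b + c) * f (b + c) a) := mul_mul_mul_comm _ _ _ _

end

theorem cocycle_cohomologous_to_sqrt_bicharacter_general
    {F : Type*} [Field F] [IsAlgClosed F]
    {G : Type*} [AddCommGroup G]
    (ε : G → G → Fˣ)
    (f : G → G → Fˣ)
    (hfsym : ∀ a b : G, f a b = ε a b * f b a)
    (hf0 : ∀ a : G, f a 0 = 1)
    (hcoc : ∀ a b c : G, f a b * f (a + b) c = f b c * f a (b + c)) :
    ∃ h : G → Fˣ, h 0 = 1 ∧
      ∀ a b : G, (h a * h b * (h (a + b))⁻¹ * f a b) ^ 2 = ε a b := by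
  obtain ⟨k, hk⟩ := exists_mul_coboundary_of_symm (fun a b => f a b * f b a)
    (fun _ _ => mul_comm _ _) (fun a => by simp [hf0, cocycle_map_zero_left hcoc hf0])
    (cocycle_symmPart hcoc)
  have hk0 : k 0 = 1 := by simpa [hf0] using hk 0 0
  obtain ⟨h, h0, hsq⟩ := exists_sqrt_of_map_zero (fun a => (k a)⁻¹) (by simp [hk0])
  refine ⟨h, h0, fun a b => ?_⟩
  have hfab : f a b * f b a = k a * k b * (k (a + b))⁻¹ := eq_mul_inv_of_mul_eq (hk a b)
  have hf2 : f a b ^ 2 = ε a b * (f a b * f b a) := by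
    rw [sq, mul_left_comm, ← hfsym]
  calc (h a * h b * (h (a + b))⁻¹ * f a b) ^ 2
      = h a ^ 2 * h b ^ 2 * (h (a + b) ^ 2)⁻¹ * f a b ^ 2 := by
        rw [mul_pow, mul_pow, mul_pow, inv_pow]
    _ = (k a)⁻¹ * (k b)⁻¹ * k (a + b) * (ε a b * (k a * k b * (k (a + b))⁻¹)) := by
        rw [hsq, hsq, hsq, inv_inv, hf2, hfab]
    _ = ε a b := Additive.ofMul.injective (by simp only [ofMul_mul, ofMul_inv]; abel)

/-- Over an algebraically closed field `F` of characteristic zero, let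
`ε` be a skew-symmetric bicharacter of an additive abelian group `G` with `ε(a,a) = 1`
for all `a`, and let `f : G × G → Fˣ` satisfy `f(a,b) = ε(a,b)·f(b,a)`, `f(a,0) = 1`
and the cocycle identity `f(a,b)·f(a+b,c) = f(b,c)·f(a,b+c)`.  Then `f` is
cohomologous to a square root of `ε`: there is `h : G → Fˣ` with `h(0) = 1` such that
`(h(a)·h(b)·h(a+b)⁻¹·f(a,b))² = ε(a,b)` for all `a, b ∈ G`. -/
theorem cocycle_cohomologous_to_sqrt_bicharacter
    {F : Type*} [Field F] [IsAlgClosed F] [CharZero F]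
    {G : Type*} [AddCommGroup G]
    (ε : G → G → Fˣ)
    (hskew : ∀ a b : G, ε a b * ε b a = 1)
    (hmul : ∀ a b c : G, ε a (b + c) = ε a b * ε a c)
    (hdiag : ∀ a : G, ε a a = 1)
    (f : G → G → Fˣ)
    (hfsym : ∀ a b : G, f a b = ε a b * f b a)
    (hf0 : ∀ a : G, f a 0 = 1)
    (hcoc : ∀ a b c : G, f a b * f (a + b) c = f b c * f a (b + c)) :
    ∃ h : G → Fˣ, h 0 = 1 ∧
      ∀ a b : G, (h a * h b * (h (a + b))⁻¹ * f a b) ^ 2 = ε a b :=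
  cocycle_cohomologous_to_sqrt_bicharacter_general ε f hfsym hf0 hcoc
end
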